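/- arXiv:1104.0289 — 3 statements merged into one kernel-verified Lean document; each statement's English description precedes it below -/
import Mathlib

section
/- Let D be a division ring of characteristic p > 0, and let a, x ∈ D satisfy a·x − x·a = a. Then x commutes with a^p, i.e., a^p·x = x·a^p. -/
theorem stmt8 {D : Type*} [DivisionRing D] (p : ℕ) [hp : Fact p.Prime] [CharP D p]
    (a x : D) (h : a * x - x * a = a) : a ^ p * x = x * a ^ p := by
  have key : ∀ n : ℕ, a ^ n * x = x * a ^ n + (n : D) * a ^ n := by
    intro n
    induction n with
    | zero => simp
    | succ n ih =>
      have hax : a * x = x * a + a := by rw [add_comm]; exact sub_eq_iff_eq_add.mp h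
      have hc : (n : D) * a = a * (n : D) := (Nat.cast_commute n a).eq
      calc a ^ (n + 1) * x = a * (a ^ n * x) := by rw [pow_succ']; rw [mul_assoc]
        _ = a * (x * a ^ n + (n : D) * a ^ n) := by rw [ih]
        _ = (a * x) * a ^ n + ((n : D) * a) * a ^ n := by
            rw [mul_add, ← mul_assoc, ← mul_assoc, ← hc]
        _ = (x * a + a) * a ^ n + ((n : D) * a) * a ^ n := by rw [hax]
        _ = x * a ^ (n + 1) + ((n : D) + 1) * a ^ (n + 1) := by
            rw [pow_succ, show a ^ n * a = a * a ^ n by rw [← pow_succ, pow_succ']]; noncomm_ring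
        _ = x * a ^ (n + 1) + ((n + 1 : ℕ) : D) * a ^ (n + 1) := by push_cast; ring_nf
  have := key p
  rw [CharP.cast_eq_zero D p] at this
  simpa using this
end

section
/- Let D be a division ring of characteristic zero and a, x ∈ D with a ≠ 0 and a·x − x·a = a. Then the elements a^n·x·a^(−n), for n a natural number, are pairwise distinct. -/
theorem stmt10 {D : Type*} [DivisionRing D] [CharZero D] (a x : D) (ha : a ≠ 0)
    (h : a * x - x * a = a) :
    Function.Injective (fun n : ℕ => a ^ n * x * (a ^ n)⁻¹) := by
  have hax : a * x = x * a + a := by rw [sub_eq_iff_eq_add] at h; rw [h, add_comm]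
  have key : ∀ n : ℕ, a ^ n * x = (x + n) * a ^ n := by
    intro n
    induction n with
    | zero => simp
    | succ n ih =>
      push_cast
      rw [pow_succ, mul_assoc, hax, mul_add, ← mul_assoc, ih]
      noncomm_ring
  have key2 : ∀ n : ℕ, a ^ n * x * (a ^ n)⁻¹ = x + n := by
    intro n
    rw [key, mul_assoc, mul_inv_cancel₀ (pow_ne_zero _ ha), mul_one]
  intro m n hmn
  simp only [key2] at hmn
  have : (m : D) = n := add_left_cancel hmn
  exact_mod_cast this
end

section
/- Let D be a division ring, a ∈ D, t ∈ D nonzero with t not in the image of the map x ↦ a·x − x·a, and let φ(x) = t⁻¹·(a·x − x·a). Then im(φ) ∩ ker(φ) = {0}, where im and ker are taken as additive subgroups of D. -/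
theorem stmt12 {D : Type*} [DivisionRing D] (a t : D) (ht : t ≠ 0)
    (htim : t ∉ Set.range (fun x : D => a * x - x * a)) :
    Set.range (fun x : D => t⁻¹ * (a * x - x * a)) ∩
      {y : D | t⁻¹ * (a * y - y * a) = 0} = {0} := by
  ext y
  simp only [Set.mem_inter_iff, Set.mem_range, Set.mem_setOf_eq, Set.mem_singleton_iff]
  constructor
  · rintro ⟨⟨x, hx⟩, hker⟩
    by_contra hy
    -- y commutes with a
    have h2 : a * y - y * a = 0 := by
      have := congrArg (t * ·) hker
      simpa [← mul_assoc, mul_inv_cancel₀ ht] using this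
    have hc : a * y = y * a := by rwa [sub_eq_zero] at h2
    -- hence y⁻¹ commutes with a
    have hcinv : a * y⁻¹ = y⁻¹ * a := by
      calc a * y⁻¹ = y⁻¹ * (y * a) * y⁻¹ := by
            rw [← mul_assoc, inv_mul_cancel₀ hy, one_mul]
        _ = y⁻¹ * (a * y) * y⁻¹ := by rw [hc]
        _ = y⁻¹ * a := by rw [mul_assoc, mul_assoc, mul_inv_cancel₀ hy, mul_one]
    -- a*x - x*a = t*y
    have hxy : a * x - x * a = t * y := by
      have := congrArg (t * ·) hx
      simpa [← mul_assoc, mul_inv_cancel₀ ht] using this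
    apply htim
    refine ⟨x * y⁻¹, ?_⟩
    show a * (x * y⁻¹) - x * y⁻¹ * a = t
    calc a * (x * y⁻¹) - x * y⁻¹ * a
        = (a * x - x * a) * y⁻¹ := by
          have h3 : x * y⁻¹ * a = x * a * y⁻¹ := by rw [mul_assoc, ← hcinv, ← mul_assoc]
          rw [sub_mul, h3, ← mul_assoc]
      _ = t := by rw [hxy, mul_assoc, mul_inv_cancel₀ hy, mul_one]
  · rintro rfl
    exact ⟨⟨0, by simp⟩, by simp⟩
end
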